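/- arXiv:1409.7214 — 3 statements merged into one kernel-verified Lean document; each statement's English description precedes it below -/
import Mathlib

section
/- Let p be an odd prime and m a divisor of p−1. Then every unit u ∈ (ℤ/mℤ)^× can be written as u ≡ ±(t² + s²) (mod m) for some integers t, s with gcd(t² + p²s², 6mp) = 1. Conversely every residue ±(t² + s²) mod m with gcd(t² + p²s², 6mp) = 1 is a unit modulo m. That is, (ℤ/mℤ)^× = { ±(t² + s²) mod m : t, s ∈ ℤ, gcd(t² + p²s², 6mp) = 1 }. -/
/-!
Given a unit `u` mod `m`, lift `±u` to an integer `e ≡ 1 (mod 4)`. By Dirichlet's theorem some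
prime `q > 6mp` satisfies `q ≡ e (mod 4m)`, and as `q ≡ 1 (mod 4)` it is a sum of two squares
`q = a² + b²`, where we may take `p ∤ a` since `p ∤ q`. Then `d = a² + p²b²` is prime to `p`, and
every other prime `r ∣ 6m` has `p² ≡ 1 (mod r)` (Fermat for `r = 2, 3`, and `p ≡ 1 (mod m)`),
so `r ∣ d` would force `r ∣ q`, impossible for `q > 6mp`. Finally `p ≡ 1 (mod m)` gives
`d ≡ a² + b² (mod m)`, which also proves the converse.
-/

theorem ZMod.exists_emod_four_eq_one_and_intCast_eq_or_eq_neg {m : ℕ} {u : ZMod m}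
    (hu : IsUnit u) : ∃ e : ℤ, e % 4 = 1 ∧ ((e : ZMod m) = u ∨ (e : ZMod m) = -u) := by
  obtain ⟨a, rfl⟩ := ZMod.intCast_surjective u
  have hma : IsCoprime (m : ℤ) a := (ZMod.coe_int_isUnit_iff_isCoprime a m).mp hu
  by_cases h2m : (2 : ℤ) ∣ m
  · have ha : ¬ (2 : ℤ) ∣ a := fun h2a ↦ by
      simpa [Int.isUnit_iff] using hma.isUnit_of_dvd' h2m h2a
    rcases (by omega : a % 4 = 1 ∨ -a % 4 = 1) with h | h
    · exact ⟨a, h, .inl rfl⟩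
    · exact ⟨-a, h, .inr (Int.cast_neg a)⟩
  · -- `α * m ≡ 1 (mod 4)`, so `a + α * (1 - a) * m` is `a` mod `m` and `1` mod `4`.
    obtain ⟨α, β, hαβ⟩ : IsCoprime (m : ℤ) 4 :=
      ((Int.prime_two.coprime_iff_not_dvd.mpr h2m).pow_left (m := 2)).symm
    refine ⟨a + α * (1 - a) * m, ?_, .inl ?_⟩
    · have : a + α * (1 - a) * m = 1 + 4 * (β * (a - 1)) := by linear_combination (1 - a) * hαβ
      omega
    · simp

theorem ZMod.exists_prime_gt_mod_four_eq_one_and_eq_or_eq_neg {m : ℕ} [NeZero m] {u : ZMod m}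
    (hu : IsUnit u) (N : ℕ) :
    ∃ q > N, q.Prime ∧ q % 4 = 1 ∧ ((q : ZMod m) = u ∨ (q : ZMod m) = -u) := by
  obtain ⟨e, he4, hem⟩ := exists_emod_four_eq_one_and_intCast_eq_or_eq_neg hu
  have hm : IsCoprime (m : ℤ) e := by
    rw [← coe_int_isUnit_iff_isCoprime]
    rcases hem with h | h <;> rw [h]
    exacts [hu, hu.neg]
  have h4 : IsCoprime (4 : ℤ) e :=
    (Int.prime_two.coprime_iff_not_dvd.mpr (by omega)).pow_left (m := 2)
  have he : IsUnit (e : ZMod (4 * m)) := by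
    rw [coe_int_isUnit_iff_isCoprime]
    exact_mod_cast h4.mul_left hm
  obtain ⟨q, hqN, hq, hqe⟩ := Nat.forall_exists_prime_gt_and_eq_mod he N
  have hqe : (q : ℤ) ≡ e [ZMOD 4 * m] := by
    exact_mod_cast (intCast_eq_intCast_iff _ _ (4 * m)).mp (by exact_mod_cast hqe)
  refine ⟨q, hqN, hq, ?_, ?_⟩
  · have := hqe.of_mul_right m
    unfold Int.ModEq at this
    omega
  · have := (intCast_eq_intCast_iff _ _ m).mpr (hqe.of_mul_left 4)
    rw [Int.cast_natCast] at this
    rwa [this]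

theorem Nat.Prime.exists_sq_add_sq_not_dvd {p q : ℕ} (hq : q.Prime) (hq4 : q % 4 ≠ 3)
    (hpq : ¬ p ∣ q) : ∃ a b : ℕ, a ^ 2 + b ^ 2 = q ∧ ¬ p ∣ a := by
  have := Fact.mk hq
  obtain ⟨a, b, hab⟩ := Nat.Prime.sq_add_sq hq4
  by_cases hpa : p ∣ a
  · refine ⟨b, a, by rw [add_comm, hab], fun hpb ↦ hpq ?_⟩
    rw [← hab]
    exact dvd_add (dvd_pow hpa two_ne_zero) (dvd_pow hpb two_ne_zero)
  · exact ⟨a, b, hab, hpa⟩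

theorem ZMod.natCast_eq_one_of_dvd_sub_one {p m : ℕ} (hp : 1 ≤ p) (hm : m ∣ p - 1) :
    (p : ZMod m) = 1 := by
  rw [← Nat.sub_add_cancel hp, Nat.cast_add, (natCast_eq_zero_iff _ _).mpr hm, zero_add,
    Nat.cast_one]

theorem ZMod.natCast_sq_eq_one_of_dvd_six_mul {p m r : ℕ} (hp : p.Prime) (hm : m ∣ p - 1)
    (hr : r.Prime) (hrp : r ≠ p) (hr6m : r ∣ 6 * m) : (p : ZMod r) ^ 2 = 1 := by
  have := Fact.mk hr
  rcases hr.dvd_mul.mp hr6m with hr6 | hrm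
  · have hr23 : r - 1 ∣ 2 := by
      rcases hr.dvd_mul.mp (show r ∣ 2 * 3 from hr6) with h | h
      · rw [(Nat.prime_dvd_prime_iff_eq hr Nat.prime_two).mp h]; norm_num
      · rw [(Nat.prime_dvd_prime_iff_eq hr Nat.prime_three).mp h]
    obtain ⟨k, hk⟩ := hr23
    have hp0 : (p : ZMod r) ≠ 0 := by
      rw [Ne, natCast_eq_zero_iff, Nat.prime_dvd_prime_iff_eq hr hp]
      exact hrp
    rw [hk, pow_mul, pow_card_sub_one_eq_one hp0, one_pow]
  · rw [natCast_eq_one_of_dvd_sub_one hp.one_le (hrm.trans hm), one_pow]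

theorem Nat.coprime_sq_add_sq_mul_sq {p m q a b : ℕ} (hp : p.Prime) (hm : m ∣ p - 1)
    (hq : q.Prime) (hab : a ^ 2 + b ^ 2 = q) (hpa : ¬ p ∣ a) (hq_gt : 6 * m * p < q) :
    Nat.Coprime (a ^ 2 + p ^ 2 * b ^ 2) (6 * m * p) := by
  refine Nat.coprime_of_dvd fun r hr hrd hr6mp ↦ ?_
  by_cases hrp : r = p
  · subst hrp
    have hr_sq : r ∣ r ^ 2 * b ^ 2 := (dvd_pow_self r two_ne_zero).mul_right _
    exact hpa (hr.dvd_of_dvd_pow ((Nat.dvd_add_left hr_sq).mp hrd))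
  have hr6m : r ∣ 6 * m :=
    (hr.dvd_mul.mp hr6mp).resolve_right fun h ↦ hrp ((Nat.prime_dvd_prime_iff_eq hr hp).mp h)
  have hrq : r ∣ q := by
    rw [← ZMod.natCast_eq_zero_iff] at hrd ⊢
    push_cast [← hab] at hrd ⊢
    rwa [ZMod.natCast_sq_eq_one_of_dvd_six_mul hp hm hr hrp hr6m, one_mul] at hrd
  have hm0 : 0 < m := Nat.pos_of_dvd_of_pos hm (by have := hp.two_le; omega)
  have hqr : q = r := ((Nat.prime_dvd_prime_iff_eq hr hq).mp hrq).symm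
  have := Nat.le_of_dvd (Nat.mul_pos (by omega) hp.pos) (hqr ▸ hr6mp)
  omega

theorem units_as_sums_of_two_squares_general (p m : ℕ) (hp : p.Prime)
    (hm : m ∣ p - 1) :
    {u : ZMod m | IsUnit u} =
      {x : ZMod m | ∃ t s : ℤ, Int.gcd (t ^ 2 + (p : ℤ) ^ 2 * s ^ 2) (6 * m * p) = 1 ∧
        (x = ((t ^ 2 + s ^ 2 : ℤ) : ZMod m) ∨ x = -((t ^ 2 + s ^ 2 : ℤ) : ZMod m))} := by
  have hm0 : 0 < m := Nat.pos_of_dvd_of_pos hm (by have := hp.two_le; omega)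
  have := NeZero.of_pos hm0
  have hpm : (p : ZMod m) = 1 := ZMod.natCast_eq_one_of_dvd_sub_one hp.one_le hm
  ext x
  constructor
  · intro hx
    obtain ⟨q, hq_gt, hq, hq4, hqx⟩ :=
      ZMod.exists_prime_gt_mod_four_eq_one_and_eq_or_eq_neg hx (6 * m * p)
    have hpq : ¬ p ∣ q := fun h ↦ by
      have := Nat.le_mul_of_pos_left p (Nat.mul_pos (by norm_num : 0 < 6) hm0)
      have := (Nat.prime_dvd_prime_iff_eq hp hq).mp h
      omega
    obtain ⟨a, b, hab, hpa⟩ := hq.exists_sq_add_sq_not_dvd (by omega) hpq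
    refine ⟨a, b, ?_, ?_⟩
    · exact_mod_cast Nat.coprime_sq_add_sq_mul_sq hp hm hq hab hpa hq_gt
    · have hq_cast : ((a ^ 2 + b ^ 2 : ℤ) : ZMod m) = q := by rw [← hab]; push_cast; rfl
      rw [hq_cast]
      rcases hqx with h | h
      exacts [.inl h.symm, .inr (by rw [h, neg_neg])]
  · rintro ⟨t, s, hts, hx⟩
    have hcop : IsCoprime (m : ℤ) (t ^ 2 + p ^ 2 * s ^ 2) :=
      (Int.isCoprime_iff_gcd_eq_one.mpr hts).symm.of_isCoprime_of_dvd_left ⟨6 * p, by ring⟩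
    have hunit : IsUnit ((t ^ 2 + s ^ 2 : ℤ) : ZMod m) := by
      have := (ZMod.coe_int_isUnit_iff_isCoprime _ _).mpr hcop
      push_cast at this ⊢
      rwa [hpm, one_pow, one_mul] at this
    rcases hx with rfl | rfl
    exacts [hunit, hunit.neg]

theorem units_as_sums_of_two_squares (p m : ℕ) (hp : p.Prime) (hodd : Odd p)
    (hm : m ∣ p - 1) :
    {u : ZMod m | IsUnit u} =
      {x : ZMod m | ∃ t s : ℤ, Int.gcd (t ^ 2 + (p : ℤ) ^ 2 * s ^ 2) (6 * m * p) = 1 ∧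
        (x = ((t ^ 2 + s ^ 2 : ℤ) : ZMod m) ∨ x = -((t ^ 2 + s ^ 2 : ℤ) : ZMod m))} :=
  units_as_sums_of_two_squares_general p m hp hm
end

section
/- Let p be an odd prime and u an integer coprime to 4m where m | p−1. Then there exists a prime q ∉ {2, 3, p} with q ≡ 1 (mod 4) and q ≡ u or −u or u+m or −(u+m) (mod 4m), such that in particular q ≡ ±u (mod m). -/
/-!
Replacing `u` by `-u` if necessary, we may assume `u ≡ 1 (mod 4)`. Since `u` is a unit
modulo `4m`, Dirichlet's theorem gives infinitely many primes `q ≡ u (mod 4m)`, and any such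
`q > max 3 p` works.
-/

theorem Int.exists_prime_gt_modEq {n : ℕ} [NeZero n] {v : ℤ} (hv : IsCoprime v n) (N : ℕ) :
    ∃ q > N, q.Prime ∧ (q : ℤ) ≡ v [ZMOD n] := by
  obtain ⟨q, hqN, hq, hqv⟩ :=
    Nat.forall_exists_prime_gt_and_eq_mod ((ZMod.coe_int_isUnit_iff_isCoprime v n).mpr hv.symm) N
  exact ⟨q, hqN, hq, (ZMod.intCast_eq_intCast_iff _ _ _).mp (by exact_mod_cast hqv)⟩

theorem Int.emod_four_eq_one_or_neg_emod_four_eq_one {u : ℤ} (hu : Odd u) :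
    u % 4 = 1 ∨ -u % 4 = 1 := by
  obtain ⟨k, rfl⟩ := hu
  omega

theorem Int.odd_of_isCoprime_four_mul {u n : ℤ} (hu : IsCoprime u (4 * n)) : Odd u := by
  rw [← Int.not_even_iff_odd, even_iff_two_dvd]
  intro h2
  have := hu.isUnit_of_dvd' h2 (Dvd.dvd.mul_right (by norm_num) n)
  norm_num [Int.isUnit_iff] at this

theorem exists_prime_in_progression_general (p m : ℕ) (hp : p.Prime)
    (hm : m ∣ p - 1) (u : ℤ) (hu : Int.gcd u (4 * m) = 1) :
    ∃ q : ℕ, q.Prime ∧ q ≠ 2 ∧ q ≠ 3 ∧ q ≠ p ∧ q % 4 = 1 ∧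
      ((q : ℤ) ≡ u [ZMOD 4 * m] ∨ (q : ℤ) ≡ -u [ZMOD 4 * m] ∨
        (q : ℤ) ≡ u + m [ZMOD 4 * m] ∨ (q : ℤ) ≡ -(u + m) [ZMOD 4 * m]) ∧
      ((q : ℤ) ≡ u [ZMOD m] ∨ (q : ℤ) ≡ -u [ZMOD m]) := by
  have : NeZero (4 * m) := ⟨by
    have := Nat.pos_of_dvd_of_pos hm (by have := hp.two_le; omega)
    omega⟩
  have hcop : IsCoprime u (4 * m) := Int.isCoprime_iff_gcd_eq_one.mpr hu
  obtain ⟨v, hvu, hv4⟩ : ∃ v, (v = u ∨ v = -u) ∧ v % 4 = 1 := by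
    rcases Int.emod_four_eq_one_or_neg_emod_four_eq_one (Int.odd_of_isCoprime_four_mul hcop)
      with h | h
    exacts [⟨u, .inl rfl, h⟩, ⟨-u, .inr rfl, h⟩]
  have hvcop : IsCoprime v ((4 * m : ℕ) : ℤ) := by
    push_cast
    rcases hvu with rfl | rfl
    exacts [hcop, hcop.neg_left]
  obtain ⟨q, hqN, hq, hqv⟩ := Int.exists_prime_gt_modEq hvcop (max 3 p)
  push_cast at hqv
  have hq4 : (q : ℤ) % 4 = v % 4 := hqv.of_mul_right _
  have hqm : (q : ℤ) ≡ v [ZMOD m] := hqv.of_mul_left _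
  refine ⟨q, hq, by omega, by omega, by omega, by omega, ?_, ?_⟩ <;>
    rcases hvu with rfl | rfl <;> simp only [hqv, hqm, true_or, or_true]

theorem exists_prime_in_progression (p m : ℕ) (hp : p.Prime) (hodd : Odd p)
    (hm : m ∣ p - 1) (u : ℤ) (hu : Int.gcd u (4 * m) = 1) :
    ∃ q : ℕ, q.Prime ∧ q ≠ 2 ∧ q ≠ 3 ∧ q ≠ p ∧ q % 4 = 1 ∧
      ((q : ℤ) ≡ u [ZMOD 4 * m] ∨ (q : ℤ) ≡ -u [ZMOD 4 * m] ∨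
        (q : ℤ) ≡ u + m [ZMOD 4 * m] ∨ (q : ℤ) ≡ -(u + m) [ZMOD 4 * m]) ∧
      ((q : ℤ) ≡ u [ZMOD m] ∨ (q : ℤ) ≡ -u [ZMOD m]) :=
  exists_prime_in_progression_general p m hp hm u hu
end

section
/- For N a positive integer, h an integer, and ε ∈ {0,1}, define θ_{N,h}^{(ε)}(τ) = Σ_{n ≡ h (mod N)} n^ε e^{πin²τ/N} for τ in the upper half-plane. Then θ_{N,h}^{(ε)}(−1/τ) = (i/N)^{1/2} (−τ)^{1/2+ε} Σ_{l mod N} e^{2πihl/N} θ_{N,l}^{(ε)}(τ). -/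
open Complex

/-- The partial theta series `θ_{N,h}^{(ε)}(τ) = ∑_{n ≡ h (mod N)} n^ε e^{π i n² τ / N}`. -/
noncomputable def thetaPart (N : ℕ) (h : ℤ) (ε : ℕ) (τ : ℂ) : ℂ :=
  ∑' n : {n : ℤ // n ≡ h [ZMOD (N : ℤ)]},
    ((n : ℤ) : ℂ) ^ ε * Complex.exp (Real.pi * Complex.I * ((n : ℤ) : ℂ) ^ 2 * τ / N)

namespace ThetaAux2


def finEquiv (N : ℕ) (hN : 0 < N) : Fin N × ℤ ≃ ℤ where
  toFun p := (p.1 : ℤ) + N * p.2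
  invFun n := (⟨(n % N).toNat, by
      have h1 : 0 ≤ n % (N : ℤ) := Int.emod_nonneg n (by exact_mod_cast hN.ne')
      have h2 : n % (N : ℤ) < N := Int.emod_lt_of_pos n (by exact_mod_cast hN)
      omega⟩, n / N)
  left_inv p := by
    obtain ⟨l, m⟩ := p
    have hl0 : (0 : ℤ) ≤ (l : ℤ) := Int.ofNat_nonneg _
    have hlN : ((l : ℕ) : ℤ) < N := by exact_mod_cast l.2
    have hmod : ((l : ℤ) + N * m) % N = (l : ℤ) := by
      rw [Int.add_mul_emod_self_left]
      exact Int.emod_eq_of_lt hl0 hlN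
    have hdiv : ((l : ℤ) + N * m) / N = m := by
      rw [Int.add_mul_ediv_left _ _ (by exact_mod_cast hN.ne' : (N : ℤ) ≠ 0),
        Int.ediv_eq_zero_of_lt hl0 hlN, zero_add]
    ext
    · simp [hmod]
    · simp [hdiv]
  right_inv n := by
    simp only
    have h1 : 0 ≤ n % (N : ℤ) := Int.emod_nonneg n (by exact_mod_cast hN.ne')
    rw [Int.toNat_of_nonneg h1]
    exact Int.emod_add_mul_ediv n N

lemma sum_tsum_eq (N : ℕ) (hN : 0 < N) {g : ℤ → ℂ} (hg : Summable g) :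
    ∑ l ∈ Finset.range N, ∑' m : ℤ, g ((l : ℤ) + N * m) = ∑' n : ℤ, g n := by
  have hsum : Summable (fun p : Fin N × ℤ => g ((finEquiv N hN) p)) :=
    ((finEquiv N hN).summable_iff (f := g)).mpr hg
  rw [← Equiv.tsum_eq (finEquiv N hN) g, Summable.tsum_prod hsum, tsum_fintype]
  rw [← Fin.sum_univ_eq_sum_range (fun l => ∑' m : ℤ, g ((l : ℤ) + N * m))]
  rfl

end ThetaAux2

namespace ThetaAux

def progEquiv (N : ℕ) (hN : 0 < N) (h : ℤ) : ℤ ≃ {n : ℤ // n ≡ h [ZMOD (N : ℤ)]} where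
  toFun m := ⟨h + N * m, by unfold Int.ModEq; simp [Int.add_mul_emod_self_left]⟩
  invFun n := ((n : ℤ) - h) / N
  left_inv m := by
    simp only [add_sub_cancel_left]
    exact Int.mul_ediv_cancel_left m (by exact_mod_cast hN.ne')
  right_inv n := by
    have hd : (N : ℤ) ∣ (n : ℤ) - h := Int.ModEq.dvd n.2.symm
    ext
    simp only
    rw [Int.mul_ediv_cancel' hd]
    ring

lemma thetaPart_eq_tsum (N : ℕ) (hN : 0 < N) (h : ℤ) (ε : ℕ) (τ : ℂ) :
    thetaPart N h ε τ = ∑' m : ℤ, ((h + N * m : ℤ) : ℂ) ^ ε *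
      Complex.exp (Real.pi * Complex.I * ((h + N * m : ℤ) : ℂ) ^ 2 * τ / N) := by
  rw [thetaPart, ← Equiv.tsum_eq (progEquiv N hN h)]
  rfl

-- now the sum-over-residues lemmas
lemma coeff_shift (N : ℕ) (hN : 0 < N) (h m : ℤ) (l : ℕ) :
    Complex.exp (2 * Real.pi * Complex.I * ((h : ℂ) * (l : ℂ)) / N)
      = Complex.exp (2 * Real.pi * Complex.I * (h : ℂ) * (((l : ℤ) + N * m : ℤ) : ℂ) / N) := by
  have hN' : (N : ℂ) ≠ 0 := Nat.cast_ne_zero.mpr hN.ne'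
  have : 2 * (Real.pi : ℂ) * Complex.I * (h : ℂ) * (((l : ℤ) + N * m : ℤ) : ℂ) / N
      = 2 * Real.pi * Complex.I * ((h : ℂ) * (l : ℂ)) / N + (h * m : ℤ) * (2 * Real.pi * Complex.I) := by
    push_cast
    field_simp
  rw [this, Complex.exp_add, Complex.exp_int_mul_two_pi_mul_I, mul_one]

lemma term0 (N : ℕ) (hN : 0 < N) (h : ℤ) (τ : ℂ) (n : ℤ) :
    Complex.exp (2 * Real.pi * Complex.I * (h : ℂ) * (n : ℂ) / N) * ((n : ℂ) ^ (0:ℕ) *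
      Complex.exp (Real.pi * Complex.I * (n : ℂ) ^ 2 * τ / N))
    = jacobiTheta₂_term n ((h : ℂ) / N) (τ / N) := by
  have hN' : (N : ℂ) ≠ 0 := Nat.cast_ne_zero.mpr hN.ne'
  rw [pow_zero, one_mul, jacobiTheta₂_term, ← Complex.exp_add]
  congr 1
  field_simp

lemma term1 (N : ℕ) (hN : 0 < N) (h : ℤ) (τ : ℂ) (n : ℤ) :
    Complex.exp (2 * Real.pi * Complex.I * (h : ℂ) * (n : ℂ) / N) * ((n : ℂ) ^ (1:ℕ) *
      Complex.exp (Real.pi * Complex.I * (n : ℂ) ^ 2 * τ / N))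
    = (1 / (2 * Real.pi * Complex.I)) * jacobiTheta₂'_term n ((h : ℂ) / N) (τ / N) := by
  have hN' : (N : ℂ) ≠ 0 := Nat.cast_ne_zero.mpr hN.ne'
  have h2πI : (2 * (Real.pi : ℂ) * Complex.I) ≠ 0 := by
    simp [Real.pi_ne_zero, Complex.I_ne_zero]
  rw [pow_one, jacobiTheta₂'_term, jacobiTheta₂_term,
    show 2 * (Real.pi : ℂ) * Complex.I * (n : ℂ) * ((h : ℂ) / N) = 2 * Real.pi * Complex.I * (h : ℂ) * (n : ℂ) / N by ring,
    show (Real.pi : ℂ) * Complex.I * (n : ℂ) ^ 2 * (τ / N) = Real.pi * Complex.I * (n : ℂ) ^ 2 * τ / N by ring,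
    Complex.exp_add]
  field_simp

lemma sum_theta (N : ℕ) (hN : 0 < N) (h : ℤ) (ε : ℕ) (hε : ε = 0 ∨ ε = 1) {τ : ℂ} (hτ : 0 < τ.im) :
    ∑ l ∈ Finset.range N,
        Complex.exp (2 * Real.pi * Complex.I * ((h : ℂ) * (l : ℂ)) / N) * thetaPart N l ε τ
      = ∑' n : ℤ, Complex.exp (2 * Real.pi * Complex.I * (h : ℂ) * (n : ℂ) / N) *
          ((n : ℂ) ^ ε * Complex.exp (Real.pi * Complex.I * (n : ℂ) ^ 2 * τ / N)) := by
  have hN' : (N : ℂ) ≠ 0 := Nat.cast_ne_zero.mpr hN.ne'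
  have himN : 0 < (τ / (N : ℂ)).im := by
    have hrw : (τ / (N : ℂ)) = τ * (((N : ℝ)⁻¹ : ℝ) : ℂ) := by push_cast; ring
    rw [hrw, Complex.mul_im, Complex.ofReal_re, Complex.ofReal_im, mul_zero, zero_add]
    exact mul_pos hτ (by positivity)
  set g : ℤ → ℂ := fun n => Complex.exp (2 * Real.pi * Complex.I * (h : ℂ) * (n : ℂ) / N) *
      ((n : ℂ) ^ ε * Complex.exp (Real.pi * Complex.I * (n : ℂ) ^ 2 * τ / N)) with hg
  have hgs : Summable g := by
    rcases hε with rfl | rfl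
    · have : g = fun n => jacobiTheta₂_term n ((h : ℂ) / N) (τ / N) :=
        funext fun n => term0 N hN h τ n
      rw [this]
      exact (summable_jacobiTheta₂_term_iff ((h : ℂ) / N) (τ / N)).mpr himN
    · have : g = fun n => (1 / (2 * Real.pi * Complex.I)) * jacobiTheta₂'_term n ((h : ℂ) / N) (τ / N) :=
        funext fun n => term1 N hN h τ n
      rw [this]
      exact ((summable_jacobiTheta₂'_term_iff ((h : ℂ) / N) (τ / N)).mpr himN).mul_left _
  have hterm : ∀ l ∈ Finset.range N,
      Complex.exp (2 * Real.pi * Complex.I * ((h : ℂ) * (l : ℂ)) / N) * thetaPart N l ε τ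
        = ∑' m : ℤ, g ((l : ℤ) + N * m) := by
    intro l _
    rw [thetaPart_eq_tsum N hN (l : ℤ) ε τ, ← tsum_mul_left]
    refine tsum_congr fun m => ?_
    rw [coeff_shift N hN h m l, hg]
  rw [Finset.sum_congr rfl hterm, ThetaAux2.sum_tsum_eq N hN hgs]

lemma exp_shift (N : ℕ) (hN : 0 < N) (h m : ℤ) (τ : ℂ) :
    Complex.exp (Real.pi * Complex.I * ((h : ℂ)) ^ 2 * τ / N) *
      jacobiTheta₂_term m ((h : ℂ) * τ) ((N : ℂ) * τ)
    = Complex.exp (Real.pi * Complex.I * ((h + N * m : ℤ) : ℂ) ^ 2 * τ / N) := by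
  have hN' : (N : ℂ) ≠ 0 := Nat.cast_ne_zero.mpr hN.ne'
  rw [jacobiTheta₂_term, ← Complex.exp_add]
  congr 1
  push_cast
  field_simp
  ring

lemma theta0_eq (N : ℕ) (hN : 0 < N) (h : ℤ) (τ : ℂ) :
    thetaPart N h 0 τ = Complex.exp (Real.pi * Complex.I * (h : ℂ) ^ 2 * τ / N) *
      jacobiTheta₂ ((h : ℂ) * τ) ((N : ℂ) * τ) := by
  rw [thetaPart_eq_tsum N hN, jacobiTheta₂, ← tsum_mul_left]
  refine tsum_congr fun m => ?_
  rw [pow_zero, one_mul, exp_shift N hN]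

lemma theta1_eq (N : ℕ) (hN : 0 < N) (h : ℤ) {τ : ℂ} (hτ : 0 < τ.im) :
    thetaPart N h 1 τ = Complex.exp (Real.pi * Complex.I * (h : ℂ) ^ 2 * τ / N) *
      ((h : ℂ) * jacobiTheta₂ ((h : ℂ) * τ) ((N : ℂ) * τ) +
        ((N : ℂ) / (2 * Real.pi * Complex.I)) * jacobiTheta₂' ((h : ℂ) * τ) ((N : ℂ) * τ)) := by
  have hN' : (N : ℂ) ≠ 0 := Nat.cast_ne_zero.mpr hN.ne'
  have him : 0 < ((N : ℂ) * τ).im := by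
    have : ((N : ℂ) * τ).im = (N : ℝ) * τ.im := by simp [Complex.mul_im]
    rw [this]
    exact mul_pos (by exact_mod_cast hN) hτ
  have hs1 := (hasSum_jacobiTheta₂_term ((h : ℂ) * τ) him).summable
  have hs2 := (hasSum_jacobiTheta₂'_term ((h : ℂ) * τ) him).summable
  set c : ℂ := Complex.exp (Real.pi * Complex.I * (h : ℂ) ^ 2 * τ / N) with hc
  have h2πI : (2 * (Real.pi : ℂ) * Complex.I) ≠ 0 := by
    simp [Real.pi_ne_zero, Complex.I_ne_zero]
  have key : ∀ m : ℤ, ((h + N * m : ℤ) : ℂ) ^ 1 *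
      Complex.exp (Real.pi * Complex.I * ((h + N * m : ℤ) : ℂ) ^ 2 * τ / N)
      = (c * (h : ℂ)) * jacobiTheta₂_term m ((h : ℂ) * τ) ((N : ℂ) * τ)
        + (c * ((N : ℂ) / (2 * Real.pi * Complex.I))) *
            jacobiTheta₂'_term m ((h : ℂ) * τ) ((N : ℂ) * τ) := by
    intro m
    rw [pow_one, ← exp_shift N hN h m τ, ← hc, jacobiTheta₂'_term]
    push_cast
    field_simp
  rw [thetaPart_eq_tsum N hN]
  calc ∑' m : ℤ, ((h + N * m : ℤ) : ℂ) ^ 1 *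
        Complex.exp (Real.pi * Complex.I * ((h + N * m : ℤ) : ℂ) ^ 2 * τ / N)
      = ∑' m : ℤ, ((c * (h : ℂ)) * jacobiTheta₂_term m ((h : ℂ) * τ) ((N : ℂ) * τ)
        + (c * ((N : ℂ) / (2 * Real.pi * Complex.I))) *
            jacobiTheta₂'_term m ((h : ℂ) * τ) ((N : ℂ) * τ)) := tsum_congr key
    _ = (c * (h : ℂ)) * jacobiTheta₂ ((h : ℂ) * τ) ((N : ℂ) * τ)
        + (c * ((N : ℂ) / (2 * Real.pi * Complex.I))) *
            jacobiTheta₂' ((h : ℂ) * τ) ((N : ℂ) * τ) := by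
        rw [Summable.tsum_add (hs1.mul_left _) (hs2.mul_left _), tsum_mul_left, tsum_mul_left]
        rfl
    _ = _ := by ring


lemma sum_theta0 (N : ℕ) (hN : 0 < N) (h : ℤ) {τ : ℂ} (hτ : 0 < τ.im) :
    ∑ l ∈ Finset.range N,
        Complex.exp (2 * Real.pi * Complex.I * ((h : ℂ) * (l : ℂ)) / N) * thetaPart N l 0 τ
      = jacobiTheta₂ ((h : ℂ) / N) (τ / N) := by
  rw [sum_theta N hN h 0 (Or.inl rfl) hτ, jacobiTheta₂]
  exact tsum_congr (term0 N hN h τ)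

lemma sum_theta1 (N : ℕ) (hN : 0 < N) (h : ℤ) {τ : ℂ} (hτ : 0 < τ.im) :
    ∑ l ∈ Finset.range N,
        Complex.exp (2 * Real.pi * Complex.I * ((h : ℂ) * (l : ℂ)) / N) * thetaPart N l 1 τ
      = (1 / (2 * Real.pi * Complex.I)) * jacobiTheta₂' ((h : ℂ) / N) (τ / N) := by
  rw [sum_theta N hN h 1 (Or.inr rfl) hτ, jacobiTheta₂', ← tsum_mul_left]
  exact tsum_congr (term1 N hN h τ)

lemma mul_cpow_arg {a b : ℂ} (ha : a ≠ 0) (hb : b ≠ 0)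
    (hab : a.arg + b.arg ∈ Set.Ioc (-Real.pi) Real.pi) (w : ℂ) :
    (a * b) ^ w = a ^ w * b ^ w := by
  rw [Complex.cpow_def_of_ne_zero (mul_ne_zero ha hb), Complex.cpow_def_of_ne_zero ha,
    Complex.cpow_def_of_ne_zero hb, Complex.log_mul ha hb hab, add_mul, Complex.exp_add]

end ThetaAux

theorem thetaPart_inversion (N : ℕ) (hN : 0 < N) (h : ℤ) (ε : ℕ) (hε : ε = 0 ∨ ε = 1)
    (τ : ℂ) (hτ : 0 < τ.im) :
    thetaPart N h ε (-1 / τ) =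
      (Complex.I / N) ^ ((1 : ℂ) / 2) * (-τ) ^ ((1 : ℂ) / 2 + ε) *
        ∑ l ∈ Finset.range N,
          Complex.exp (2 * Real.pi * Complex.I * (h * l) / N) * thetaPart N l ε τ := by
  have hτ0 : τ ≠ 0 := fun h0 => by simp [h0] at hτ
  have hN' : (N : ℂ) ≠ 0 := Nat.cast_ne_zero.mpr hN.ne'
  have hπ : ((Real.pi : ℂ)) ≠ 0 := Complex.ofReal_ne_zero.mpr Real.pi_ne_zero
  have hτim : 0 < (-1 / τ).im := by
    rw [div_eq_mul_inv, neg_one_mul, Complex.neg_im, Complex.inv_im, neg_div, neg_neg]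
    exact div_pos hτ (Complex.normSq_pos.mpr hτ0)
  have hIN : Complex.I / (N : ℂ) ≠ 0 := div_ne_zero Complex.I_ne_zero hN'
  have hnegτ : -τ ≠ 0 := neg_ne_zero.mpr hτ0
  have hargIN : (Complex.I / (N : ℂ)).arg = Real.pi / 2 := by
    rw [show Complex.I / (N : ℂ) = Complex.I * (((N : ℝ)⁻¹ : ℝ) : ℂ) by push_cast; ring,
      Complex.arg_mul_real (by positivity), Complex.arg_I]
  have hargτ : (-τ).arg < 0 := Complex.arg_neg_iff.mpr (by simpa using hτ)
  have hargτ' : -Real.pi < (-τ).arg := Complex.neg_pi_lt_arg (-τ)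
  have hS : ((Complex.I / (N : ℂ)) * (-τ)) ^ ((1 : ℂ) / 2)
      = (Complex.I / (N : ℂ)) ^ ((1 : ℂ) / 2) * (-τ) ^ ((1 : ℂ) / 2) :=
    ThetaAux.mul_cpow_arg hIN hnegτ
      ⟨by rw [hargIN]; linarith [Real.pi_pos], by rw [hargIN]; linarith [Real.pi_pos]⟩ _
  have h1 : (Complex.I / (N : ℂ)) ^ ((1 : ℂ) / 2) ≠ 0 := by
    simp [Complex.cpow_eq_zero_iff, hIN]
  have h2 : (-τ) ^ ((1 : ℂ) / 2) ≠ 0 := by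
    simp [Complex.cpow_eq_zero_iff, hnegτ]
  have hE : -(Real.pi : ℂ) * Complex.I * ((h : ℂ) / N) ^ 2 / (τ / N)
      = (Real.pi : ℂ) * Complex.I * (h : ℂ) ^ 2 * (-1 / τ) / N := by
    field_simp [h1, h2, hπ, Complex.I_ne_zero]
  have harg1 : (h : ℂ) * (-1 / τ) = -((h : ℂ) / τ) := by ring
  have harg2 : ((h : ℂ) / N) / (τ / N) = (h : ℂ) / τ := by
    field_simp [h1, h2, hπ, Complex.I_ne_zero]
  have harg3 : (N : ℂ) * (-1 / τ) = -1 / (τ / N) := by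
    field_simp [h1, h2, hπ, Complex.I_ne_zero]
  have hSrw : -Complex.I * (τ / N) = (Complex.I / (N : ℂ)) * (-τ) := by ring
  have hSne : (-Complex.I * (τ / N)) ^ ((1 : ℂ) / 2) ≠ 0 := by
    rw [hSrw, hS]
    exact mul_ne_zero h1 h2
  have hmerge0 : (Complex.I / (N : ℂ)) ^ ((1 : ℂ) / 2) * (-τ) ^ ((1 : ℂ) / 2)
      = (-Complex.I * (τ / N)) ^ ((1 : ℂ) / 2) := by
    rw [hSrw, hS]
  have hmerge1 : (Complex.I / (N : ℂ)) ^ ((1 : ℂ) / 2) * ((-τ) ^ ((1 : ℂ) / 2) * (-τ) ^ (1 : ℂ))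
      = (-Complex.I * (τ / N)) ^ ((1 : ℂ) / 2) * (-τ) := by
    rw [hSrw, hS, Complex.cpow_one]
    ring
  rcases hε with rfl | rfl
  · rw [ThetaAux.theta0_eq N hN h (-1 / τ), ThetaAux.sum_theta0 N hN h hτ,
      jacobiTheta₂_functional_equation ((h : ℂ) / N) (τ / N), harg2, harg1,
      jacobiTheta₂_neg_left, harg3, hE]
    simp only [Nat.cast_zero, add_zero]
    rw [hmerge0]
    set S : ℂ := (-Complex.I * (τ / N)) ^ ((1 : ℂ) / 2) with hSdef
    field_simp
    try ring
  · rw [ThetaAux.theta1_eq N hN h hτim, ThetaAux.sum_theta1 N hN h hτ,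
      jacobiTheta₂'_functional_equation ((h : ℂ) / N) (τ / N), harg2, harg1,
      jacobiTheta₂_neg_left, jacobiTheta₂'_neg_left, harg3, hE]
    simp only [Nat.cast_one]
    rw [Complex.cpow_add _ _ hnegτ, hmerge1]
    set S : ℂ := (-Complex.I * (τ / N)) ^ ((1 : ℂ) / 2) with hSdef
    field_simp [hSne, hπ, Complex.I_ne_zero]
    try ring
end
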